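/- arXiv:2111.07761 — 2 statements merged into one kernel-verified Lean document; each statement's English description precedes it below -/
import Mathlib

section
/- A metric d on a set X is an ultrametric (satisfies d(x,y) ≤ max{d(x,z), d(y,z)} for all x, y, z) if and only if it is realized as the leaf-to-leaf path distance in a rooted positively-weighted tree whose leaves are X and in which every root-to-leaf path has the same total weight. -/
open scoped Classical

/-- The weighted path distance between two nodes of a tree. -/
noncomputable def treeDist {V : Type*} (T : SimpleGraph V) (hT : T.IsTree) (w : Sym2 V → ℝ)
    (u v : V) : ℝ :=
  (((hT.existsUnique_path u v).exists.choose).edges.map w).sum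

/-- `d` is a metric on `X`. -/
def IsMetricOn {X : Type*} (d : X → X → ℝ) : Prop :=
  (∀ x y, 0 ≤ d x y) ∧ (∀ x y, d x y = 0 ↔ x = y) ∧ (∀ x y, d x y = d y x) ∧
    ∀ x y z, d x y ≤ d x z + d y z

/-!
In a tree whose root `r` is at distance `h` from `a`, `b`, `c`, the distance from `a` to `b` is
`2 * (h - δ m)`, where `m` is the meet of the paths from `a` and `b` to `r` and `δ m` its
distance to `r`. The meets of `a, c` and of `b, c` both lie on the path from `c` to `r`; the one
nearer to `r` then lies on the root paths of `a` and `b` as well, which gives the strong triangle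
inequality.

Conversely, an ultrametric is realised by its dendrogram. Let `t₀ = 0 < t₁ < ⋯` be the values
`d x y / 2`. The nodes at level `i` are the balls `{y | d x y ≤ 2 tᵢ}`, which partition `X` by
the strong triangle inequality; each is joined to the ball of level `i + 1` containing it, by an
edge of weight `tᵢ₊₁ - tᵢ`. The leaves are the balls of level `0`, i.e. the points, all at
distance `t_top` from the root, and the balls of `x` and `y` merge at the level `k` with
`2 tₖ = d x y`.
-/

namespace SimpleGraph

variable {V : Type*} {G : SimpleGraph V}

namespace Walk

def weight (w : Sym2 V → ℝ) {u v : V} (p : G.Walk u v) : ℝ := (p.edges.map w).sum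

variable (w : Sym2 V → ℝ)

@[simp] lemma weight_nil {u : V} : (nil : G.Walk u u).weight w = 0 := rfl

@[simp] lemma weight_cons {u v x : V} (h : G.Adj u v) (p : G.Walk v x) :
    (cons h p).weight w = w s(u, v) + p.weight w := by
  simp [weight]

@[simp] lemma weight_append {u v x : V} (p : G.Walk u v) (q : G.Walk v x) :
    (p.append q).weight w = p.weight w + q.weight w := by
  simp [weight]

@[simp] lemma weight_concat {u v x : V} (p : G.Walk u v) (h : G.Adj v x) :
    (p.concat h).weight w = p.weight w + w s(v, x) := by
  simp [weight, edges_concat]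

@[simp] lemma weight_reverse {u v : V} (p : G.Walk u v) : p.reverse.weight w = p.weight w := by
  simp [weight, List.sum_reverse]

@[simp] lemma weight_copy {u v u' v' : V} (p : G.Walk u v) (hu : u = u') (hv : v = v') :
    (p.copy hu hv).weight w = p.weight w := by
  subst hu hv; rfl

variable {w}

lemma weight_pos (hw : ∀ e ∈ G.edgeSet, 0 < w e) {u v : V} (p : G.Walk u v) (huv : u ≠ v) :
    0 < p.weight w := by
  have weight_nonneg : ∀ {a b : V} (q : G.Walk a b), 0 ≤ q.weight w := fun q =>
    List.sum_nonneg fun _ he => by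
      obtain ⟨e, he', rfl⟩ := List.mem_map.1 he
      exact (hw e (q.edges_subset_edgeSet he')).le
  cases p with
  | nil => exact absurd rfl huv
  | cons h q => simpa using add_pos_of_pos_of_nonneg (hw _ h) (weight_nonneg q)

lemma IsPath.append {u v x : V} {p : G.Walk u v} {q : G.Walk v x} (hp : p.IsPath)
    (hq : q.IsPath) (hpq : ∀ y ∈ p.support, y ∈ q.support → y = v) : (p.append q).IsPath := by
  rw [isPath_def, support_append]
  refine hp.support_nodup.append (q.support.tail_sublist.nodup hq.support_nodup)
    fun y hy hy' => ?_
  have hqv := hq.support_nodup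
  rw [← cons_tail_support, List.nodup_cons] at hqv
  exact hqv.1 (hpq y hy (List.mem_of_mem_tail hy') ▸ hy')

end Walk

/-- A vertex of minimal rank on a cycle would have two neighbours of larger rank. -/
theorem isAcyclic_of_rank {β : Type*} [LinearOrder β] (ℓ : V → β)
    (hne : ∀ ⦃a b⦄, G.Adj a b → ℓ a ≠ ℓ b)
    (hup : ∀ ⦃a b c⦄, G.Adj a b → G.Adj a c → ℓ a < ℓ b → ℓ a < ℓ c → b = c) :
    G.IsAcyclic := by
  classical
  intro v c hc
  obtain ⟨u, hu, hmin⟩ := c.support.toFinset.exists_min_image ℓ ⟨v, by simp⟩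
  rw [List.mem_toFinset] at hu
  have hc' := (Walk.isCycle_rotate hu).2 hc
  have hlt : ∀ i, G.Adj u ((c.rotate u hu).getVert i) → ℓ u < ℓ ((c.rotate u hu).getVert i) :=
    fun i hadj => (hmin _ (List.mem_toFinset.2 ((c.mem_support_rotate_iff u hu).1
      (Walk.getVert_mem_support _ i)))).lt_of_ne (hne hadj)
  have hsnd := Walk.adj_snd hc'.not_nil
  have hpen := (Walk.adj_penultimate hc'.not_nil).symm
  exact hc'.snd_ne_penultimate (hup hsnd hpen (hlt _ hsnd) (hlt _ hpen))

end SimpleGraph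

namespace SimpleGraph.IsTree

open Walk

variable {V : Type*} {T : SimpleGraph V} (hT : T.IsTree)

noncomputable def path (u v : V) : T.Walk u v := (hT.existsUnique_path u v).exists.choose

lemma isPath_path (u v : V) : (hT.path u v).IsPath :=
  (hT.existsUnique_path u v).exists.choose_spec

lemma eq_path {u v : V} {p : T.Walk u v} (hp : p.IsPath) : p = hT.path u v :=
  (hT.existsUnique_path u v).unique hp (hT.isPath_path u v)

lemma path_reverse (u v : V) : (hT.path u v).reverse = hT.path v u :=
  hT.eq_path (hT.isPath_path u v).reverse

lemma mem_support_path_comm {u v x : V} :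
    x ∈ (hT.path u v).support ↔ x ∈ (hT.path v u).support := by
  rw [← hT.path_reverse v u, support_reverse, List.mem_reverse]

variable {hT} {u v x : V}

lemma takeUntil_path (hx : x ∈ (hT.path u v).support) :
    (hT.path u v).takeUntil x hx = hT.path u x :=
  hT.eq_path ((hT.isPath_path u v).takeUntil hx)

lemma dropUntil_path (hx : x ∈ (hT.path u v).support) :
    (hT.path u v).dropUntil x hx = hT.path x v :=
  hT.eq_path ((hT.isPath_path u v).dropUntil hx)

lemma mem_support_path_iff (hx : x ∈ (hT.path u v).support) {y : V} :
    y ∈ (hT.path u v).support ↔ y ∈ (hT.path u x).support ∨ y ∈ (hT.path x v).support := by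
  rw [← takeUntil_path hx, ← dropUntil_path hx, ← mem_support_append_iff, take_spec]

lemma support_path_subset_left (hx : x ∈ (hT.path u v).support) :
    (hT.path u x).support ⊆ (hT.path u v).support :=
  fun _ hy => (mem_support_path_iff hx).2 (Or.inl hy)

lemma support_path_subset_right (hx : x ∈ (hT.path u v).support) :
    (hT.path x v).support ⊆ (hT.path u v).support :=
  fun _ hy => (mem_support_path_iff hx).2 (Or.inr hy)

end SimpleGraph.IsTree

section TreeDist

open SimpleGraph

variable {V : Type*} {T : SimpleGraph V} (hT : T.IsTree) {w : Sym2 V → ℝ}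

lemma treeDist_eq_weight {u v : V} {p : T.Walk u v} (hp : p.IsPath) :
    treeDist T hT w u v = p.weight w := by
  rw [hT.eq_path hp]; rfl

lemma treeDist_comm (u v : V) : treeDist T hT w u v = treeDist T hT w v u := by
  rw [treeDist_eq_weight hT ((hT.isPath_path v u).reverse), Walk.weight_reverse]; rfl

lemma treeDist_pos (hw : ∀ e ∈ T.edgeSet, 0 < w e) {u v : V} (huv : u ≠ v) :
    0 < treeDist T hT w u v :=
  Walk.weight_pos hw _ huv

lemma treeDist_add_of_mem_support {u v x : V} (hx : x ∈ (hT.path u v).support) :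
    treeDist T hT w u v = treeDist T hT w u x + treeDist T hT w x v := by
  rw [treeDist_eq_weight hT (hT.isPath_path u v), ← (hT.path u v).take_spec hx,
    Walk.weight_append, IsTree.takeUntil_path, IsTree.dropUntil_path]
  rfl

/-- With unit edge weights, each of `x` and `y` would otherwise be strictly farther from `c` than
the other. -/
lemma SimpleGraph.IsTree.mem_support_path_or {c r x y : V} (hx : x ∈ (hT.path c r).support)
    (hy : y ∈ (hT.path c r).support) :
    x ∈ (hT.path y r).support ∨ y ∈ (hT.path x r).support := by
  by_cases hxy : x = y
  · exact Or.inl (hxy ▸ Walk.start_mem_support _)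
  rcases (IsTree.mem_support_path_iff hx).1 hy with hyx | hyx
  · rcases (IsTree.mem_support_path_iff hy).1 hx with hxy' | hxy'
    · have h₁ := treeDist_add_of_mem_support hT (w := fun _ => 1) hyx
      have h₂ := treeDist_add_of_mem_support hT (w := fun _ => 1) hxy'
      have := treeDist_pos hT (w := fun _ => 1) (fun _ _ => one_pos) hxy
      linarith [treeDist_comm hT (w := fun _ => 1) x y]
    · exact Or.inl hxy'
  · exact Or.inr hyx

variable (hw : ∀ e ∈ T.edgeSet, 0 < w e)
include hw

lemma exists_meet (a b r : V) :
    ∃ m ∈ (hT.path a r).support, m ∈ (hT.path b r).support ∧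
      treeDist T hT w a b = treeDist T hT w a m + treeDist T hT w m b ∧
      ∀ v ∈ (hT.path a r).support, v ∈ (hT.path b r).support →
        treeDist T hT w v r ≤ treeDist T hT w m r := by
  classical
  obtain ⟨m, hm, hmax⟩ := ((hT.path a r).support.toFinset ∩ (hT.path b r).support.toFinset)
    |>.exists_max_image (treeDist T hT w · r) ⟨r, by simp⟩
  simp only [Finset.mem_inter, List.mem_toFinset, and_imp] at hm hmax
  refine ⟨m, hm.1, hm.2, ?_, hmax⟩
  have hdisj : ∀ v ∈ (hT.path a m).support, v ∈ (hT.path m b).support → v = m := by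
    -- another common vertex of the two halves would be a common vertex farther from `r`
    intro v hva hvb
    rw [hT.mem_support_path_comm] at hvb
    have hvar := IsTree.support_path_subset_left hm.1 hva
    have hle := hmax v hvar (IsTree.support_path_subset_left hm.2 hvb)
    by_contra hvm
    have := treeDist_pos hT hw hvm
    linarith [treeDist_add_of_mem_support hT (w := w) hva,
      treeDist_add_of_mem_support hT (w := w) hm.1, treeDist_add_of_mem_support hT (w := w) hvar]
  rw [treeDist_eq_weight hT ((hT.isPath_path a m).append (hT.isPath_path m b) hdisj),
    Walk.weight_append]
  rfl

theorem treeDist_le_max_of_treeDist_eq {r a b c : V} {h : ℝ} (ha : treeDist T hT w r a = h)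
    (hb : treeDist T hT w r b = h) (hc : treeDist T hT w r c = h) :
    treeDist T hT w a b ≤ max (treeDist T hT w a c) (treeDist T hT w b c) := by
  have depth : ∀ {x m}, treeDist T hT w r x = h → m ∈ (hT.path x r).support →
      treeDist T hT w x m = h - treeDist T hT w m r := by
    intro x m hx hm
    rw [treeDist_comm hT, treeDist_add_of_mem_support hT hm] at hx
    linarith
  obtain ⟨m₁, hm₁a, hm₁b, hab, hmax⟩ := exists_meet hT hw a b r
  obtain ⟨m₂, hm₂a, hm₂c, hac, -⟩ := exists_meet hT hw a c r
  obtain ⟨m₃, hm₃b, hm₃c, hbc, -⟩ := exists_meet hT hw b c r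
  rw [treeDist_comm hT m₁ b, depth ha hm₁a, depth hb hm₁b] at hab
  rw [treeDist_comm hT m₂ c, depth ha hm₂a, depth hc hm₂c] at hac
  rw [treeDist_comm hT m₃ c, depth hb hm₃b, depth hc hm₃c] at hbc
  rcases hT.mem_support_path_or hm₂c hm₃c with h₂₃ | h₃₂
  · have := hmax m₂ hm₂a (IsTree.support_path_subset_right hm₃b h₂₃)
    exact le_max_of_le_left (by linarith)
  · have := hmax m₃ (IsTree.support_path_subset_right hm₂a h₃₂) hm₃b
    exact le_max_of_le_right (by linarith)

end TreeDist

namespace Dendrogram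

open SimpleGraph

variable {X : Type*} [Fintype X] (d : X → X → ℝ)

noncomputable def heights : Finset ℝ := Finset.univ.image fun p : X × X => d p.1 p.2 / 2

abbrev Level : Type := Fin (heights d).card

noncomputable def height : Level d ↪o ℝ := (heights d).orderEmbOfFin rfl

instance [Nonempty X] : NeZero (heights d).card :=
  ⟨(Finset.card_pos.2 (Finset.univ_nonempty.image _)).ne'⟩

lemma exists_height_eq (x y : X) : ∃ k, d x y = 2 * height d k := by
  obtain ⟨k, hk⟩ : d x y / 2 ∈ Set.range (height d) := by
    rw [height, Finset.range_orderEmbOfFin]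
    exact Finset.mem_image_of_mem _ (Finset.mem_univ (x, y))
  exact ⟨k, by rw [hk]; ring⟩

lemma exists_eq_height (k : Level d) : ∃ x y, d x y = 2 * height d k := by
  obtain ⟨⟨x, y⟩, -, h⟩ := Finset.mem_image.1 ((heights d).orderEmbOfFin_mem rfl k)
  exact ⟨x, y, by rw [height, ← h]; ring⟩

lemma le_height_top [Nonempty X] (x y : X) : d x y ≤ 2 * height d ⊤ := by
  obtain ⟨k, hk⟩ := exists_height_eq d x y
  linarith [(height d).monotone (le_top : k ≤ ⊤)]

def Clustered (p q : X × Level d) : Prop := p.2 = q.2 ∧ d p.1 q.1 ≤ 2 * height d p.2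

/-- `node d x i` is the ball `{y | d x y ≤ 2 * height d i}` at level `i`; for an ultrametric
`Clustered d` is an equivalence relation and these balls are its classes. -/
def Node : Type _ := Quot (Clustered d)

def node (x : X) (i : Level d) : Node d := Quot.mk _ (x, i)

instance : Finite (Node d) := inferInstanceAs (Finite (Quot _))

def level : Node d → Level d := Quot.lift Prod.snd fun _ _ h => h.1

def graph : SimpleGraph (Node d) :=
  fromRel fun a b => ∃ x i j, i ⋖ j ∧ a = node d x i ∧ b = node d x j

noncomputable def edgeWeight : Sym2 (Node d) → ℝ :=
  Sym2.lift ⟨fun a b => |height d (level d a) - height d (level d b)|,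
    fun _ _ => abs_sub_comm _ _⟩

variable {d}

@[simp] lemma level_node (x : X) (i : Level d) : level d (node d x i) = i := rfl

lemma exists_node_eq (v : Node d) : ∃ x i, node d x i = v := by
  obtain ⟨⟨x, i⟩, rfl⟩ := Quot.exists_rep v
  exact ⟨x, i, rfl⟩

lemma node_eq_node {x y : X} {i : Level d} (h : d x y ≤ 2 * height d i) :
    node d x i = node d y i :=
  Quot.sound ⟨rfl, h⟩

lemma node_top [Nonempty X] (x y : X) : node d x ⊤ = node d y ⊤ :=
  node_eq_node (le_height_top d x y)

lemma adj_node {x : X} {i j : Level d} (h : i ⋖ j) : (graph d).Adj (node d x i) (node d x j) :=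
  (fromRel_adj _ _ _).2 ⟨fun e => h.ne (congrArg (level d) e), Or.inl ⟨x, i, j, h, rfl, rfl⟩⟩

lemma level_ne_of_adj {a b : Node d} (h : (graph d).Adj a b) : level d a ≠ level d b := by
  obtain ⟨-, ⟨x, i, j, hij, rfl, rfl⟩ | ⟨x, i, j, hij, rfl, rfl⟩⟩ := (fromRel_adj _ _ _).1 h
  exacts [hij.ne, hij.ne']

lemma exists_of_adj_of_level_lt {a b : Node d} (h : (graph d).Adj a b)
    (hlt : level d a < level d b) : ∃ x i j, i ⋖ j ∧ a = node d x i ∧ b = node d x j := by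
  obtain ⟨-, hab | ⟨x, i, j, hij, rfl, rfl⟩⟩ := (fromRel_adj _ _ _).1 h
  exacts [hab, absurd hij.lt hlt.not_gt]

lemma edgeWeight_pos : ∀ e ∈ (graph d).edgeSet, 0 < edgeWeight d e := by
  rintro ⟨a, b⟩ h
  exact abs_pos.2 (sub_ne_zero.2 ((height d).injective.ne (level_ne_of_adj h)))

lemma exists_isPath_from_bot [Nonempty X] (x : X) (k : Level d) :
    ∃ p : (graph d).Walk (node d x ⊥) (node d x k), p.IsPath ∧
      p.weight (edgeWeight d) = height d k - height d ⊥ ∧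
      ∀ v ∈ p.support, v = node d x (level d v) ∧ level d v ≤ k := by
  induction (bot_le : ⊥ ≤ k) using Succ.rec with
  | rfl => exact ⟨.nil, by simp, by simp, by simp⟩
  | succ k _ ih =>
    obtain ⟨p, hp, hpw, hps⟩ := ih
    by_cases hk : IsMax k
    · rw [Order.succ_eq_iff_isMax.2 hk]
      exact ⟨p, hp, hpw, hps⟩
    have hcov := Order.covBy_succ_of_not_isMax hk
    refine ⟨p.concat (adj_node hcov), hp.concat (fun h => ?_) _, ?_, ?_⟩
    · exact hcov.lt.not_ge (hps _ h).2
    · have : height d k < height d (Order.succ k) := (height d).strictMono hcov.lt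
      rw [Walk.weight_concat, hpw]
      change _ + |height d k - height d (Order.succ k)| = _
      rw [abs_sub_comm, abs_of_pos (sub_pos.2 this)]
      ring
    · intro v hv
      rw [Walk.support_concat, List.mem_append, List.mem_singleton] at hv
      rcases hv with hv | rfl
      · exact (hps v hv).imp_right (·.trans hcov.le)
      · exact ⟨rfl, le_rfl⟩

variable (hd : IsMetricOn d)
include hd

lemma height_nonneg (k : Level d) : 0 ≤ height d k := by
  obtain ⟨x, y, h⟩ := exists_eq_height d k
  linarith [hd.1 x y]

lemma height_bot [Nonempty X] : height d ⊥ = 0 := by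
  obtain ⟨k, hk⟩ := exists_height_eq d (Classical.arbitrary X) (Classical.arbitrary X)
  rw [(hd.2.1 _ _).2 rfl] at hk
  linarith [(height d).monotone (bot_le : ⊥ ≤ k), height_nonneg hd ⊥]

lemma bot_ne_top [Nontrivial X] : (⊥ : Level d) ≠ ⊤ := by
  obtain ⟨x, y, hxy⟩ := exists_pair_ne X
  intro h
  have := le_height_top d x y
  rw [← h, height_bot hd] at this
  exact hxy ((hd.2.1 x y).1 (le_antisymm (by linarith) (hd.1 x y)))

lemma treeDist_node_top_node_bot [Nonempty X] (hT : (graph d).IsTree) (r x : X) :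
    treeDist (graph d) hT (edgeWeight d) (node d r ⊤) (node d x ⊥) = height d ⊤ := by
  obtain ⟨p, hp, hpw, -⟩ := exists_isPath_from_bot x ⊤
  rw [node_top r x, treeDist_comm, treeDist_eq_weight hT hp, hpw, height_bot hd, sub_zero]

variable (hu : ∀ x y z, d x y ≤ max (d x z) (d y z))
include hu

lemma clustered_equivalence : Equivalence (Clustered d) where
  refl p := ⟨rfl, by rw [(hd.2.1 _ _).2 rfl]; linarith [height_nonneg hd p.2]⟩
  symm := fun ⟨h₁, h₂⟩ => ⟨h₁.symm, by rwa [hd.2.2.1, ← h₁]⟩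
  trans := fun ⟨h₁, h₂⟩ ⟨h₃, h₄⟩ =>
    ⟨h₁.trans h₃, (hu _ _ _).trans (max_le h₂ (by rwa [hd.2.2.1, h₁]))⟩

lemma node_eq_node_iff {x y : X} {i j : Level d} :
    node d x i = node d y j ↔ i = j ∧ d x y ≤ 2 * height d i :=
  ⟨fun h => (clustered_equivalence hd hu).eqvGen_iff.1 (Quot.eqvGen_exact h),
    fun h => Quot.sound h⟩

lemma eq_of_adj_of_level_lt {a b c : Node d} (hab : (graph d).Adj a b)
    (hac : (graph d).Adj a c) (hb : level d a < level d b) (hc : level d a < level d c) :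
    b = c := by
  obtain ⟨x, i, j, hij, rfl, rfl⟩ := exists_of_adj_of_level_lt hab hb
  obtain ⟨y, i', j', hij', ha, rfl⟩ := exists_of_adj_of_level_lt hac hc
  obtain ⟨rfl, hxy⟩ := (node_eq_node_iff hd hu).1 ha
  rw [hij.unique_right hij']
  exact node_eq_node (by linarith [(height d).monotone hij'.le])

lemma isTree [Nonempty X] : (graph d).IsTree where
  connected := (connected_iff_exists_forall_reachable _).2 ⟨node d (Classical.arbitrary X) ⊤,
    fun v => by
      obtain ⟨x, i, rfl⟩ := exists_node_eq v
      obtain ⟨p, -⟩ := exists_isPath_from_bot x ⊤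
      obtain ⟨q, -⟩ := exists_isPath_from_bot x i
      rw [node_top _ x]
      exact p.reverse.reachable.trans q.reachable⟩
  isAcyclic := isAcyclic_of_rank (level d) (fun _ _ => level_ne_of_adj)
    (fun _ _ _ => eq_of_adj_of_level_lt hd hu)

variable [Nonempty X]

lemma node_bot_injective : Function.Injective fun x => node d x ⊥ := by
  intro x y h
  have := ((node_eq_node_iff hd hu).1 h).2
  rw [height_bot hd, mul_zero] at this
  exact (hd.2.1 x y).1 (le_antisymm this (hd.1 x y))

lemma treeDist_node_bot (hT : (graph d).IsTree) (x y : X) :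
    treeDist (graph d) hT (edgeWeight d) (node d x ⊥) (node d y ⊥) = d x y := by
  obtain ⟨k, hk⟩ := exists_height_eq d x y
  have hxy : node d y k = node d x k := node_eq_node (by rw [hd.2.2.1]; exact hk.le)
  obtain ⟨p, hp, hpw, hps⟩ := exists_isPath_from_bot x k
  obtain ⟨q, hq, hqw, hqs⟩ := exists_isPath_from_bot y k
  have hdisj : ∀ v ∈ p.support, v ∈ (q.copy rfl hxy).reverse.support → v = node d x k := by
    intro v hvp hvq
    rw [Walk.support_reverse, Walk.support_copy, List.mem_reverse] at hvq
    obtain ⟨hvx, hvk⟩ := hps v hvp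
    have hle := ((node_eq_node_iff hd hu).1 (hvx.symm.trans (hqs v hvq).1)).2
    have : k ≤ level d v := (height d).le_iff_le.1 (by linarith)
    rw [hvx, le_antisymm hvk this]
  rw [treeDist_eq_weight hT (hp.append (by simpa using hq.reverse) hdisj)]
  simp only [Walk.weight_append, Walk.weight_reverse, Walk.weight_copy, hpw, hqw, hk,
    height_bot hd]
  ring

lemma exists_adj_ne_of_ne_bot {x : X} {i : Level d} (hi : i ≠ ⊥) :
    ∃ b c, (graph d).Adj (node d x i) b ∧ (graph d).Adj (node d x i) c ∧ b ≠ c := by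
  have hpred := Order.pred_covBy_of_not_isMin (not_isMin_iff_ne_bot.2 hi)
  by_cases hit : i = ⊤
  · -- the root separates a pair of points at maximal distance
    subst hit
    obtain ⟨p, q, hpq⟩ := exists_eq_height d ⊤
    refine ⟨node d p (Order.pred ⊤), node d q (Order.pred ⊤), ?_, ?_, fun h => ?_⟩
    · rw [node_top x p]; exact (adj_node hpred).symm
    · rw [node_top x q]; exact (adj_node hpred).symm
    · have := ((node_eq_node_iff hd hu).1 h).2
      linarith [(height d).strictMono hpred.lt]
  · have hsucc := Order.covBy_succ_of_not_isMax (not_isMax_iff_ne_top.2 hit)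
    exact ⟨_, _, (adj_node hpred).symm, adj_node hsucc,
      fun h => (hpred.lt.trans hsucc.lt).ne (congrArg (level d) h)⟩

lemma exists_node_bot_eq_iff [Nontrivial X] (v : Node d) :
    (∃ x, node d x ⊥ = v) ↔ ∃! u, (graph d).Adj v u := by
  constructor
  · rintro ⟨x, rfl⟩
    have hup : ∀ {u}, (graph d).Adj (node d x ⊥) u → level d (node d x ⊥) < level d u :=
      fun h => bot_lt_iff_ne_bot.2 (level_ne_of_adj h).symm
    have hadj := adj_node (x := x)
      (Order.covBy_succ_of_not_isMax (not_isMax_iff_ne_top.2 (bot_ne_top hd)))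
    exact ⟨_, hadj, fun u hu' => eq_of_adj_of_level_lt hd hu hu' hadj (hup hu') (hup hadj)⟩
  · rintro ⟨u, -, huniq⟩
    obtain ⟨x, i, rfl⟩ := exists_node_eq v
    by_cases hi : i = ⊥
    · exact ⟨x, hi ▸ rfl⟩
    obtain ⟨b, c, hb, hc, hbc⟩ := exists_adj_ne_of_ne_bot hd hu hi
    exact absurd ((huniq b hb).trans (huniq c hc).symm) hbc

end Dendrogram

/-- A metric `d` on a (finite, nontrivial) set `X` is an ultrametric, i.e.
satisfies `d(x,y) ≤ max (d(x,z)) (d(y,z))`, if and only if it is realized as the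
leaf-to-leaf path distance in a rooted, positively weighted (finite) tree whose leaves are
exactly the elements of `X` (a leaf being a node with exactly one neighbor) and in which
every root-to-leaf path has the same total weight. -/
theorem ultrametric_iff_equidistant_tree {X : Type} [Fintype X] [Nontrivial X]
    (d : X → X → ℝ) (hd : IsMetricOn d) :
    (∀ x y z, d x y ≤ max (d x z) (d y z)) ↔
    ∃ (V : Type) (_ : Fintype V) (T : SimpleGraph V) (hT : T.IsTree)
      (w : Sym2 V → ℝ) (r : V) (ι : X → V),
      Function.Injective ι ∧ (∀ e ∈ T.edgeSet, 0 < w e) ∧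
      (∀ v : V, (∃ x, ι x = v) ↔ (∃! u, T.Adj v u)) ∧
      (∃ h : ℝ, ∀ x, treeDist T hT w r (ι x) = h) ∧
      (∀ x y, d x y = treeDist T hT w (ι x) (ι y)) := by
  constructor
  · intro hu
    have hT := Dendrogram.isTree hd hu
    exact ⟨Dendrogram.Node d, Fintype.ofFinite _, Dendrogram.graph d, hT,
      Dendrogram.edgeWeight d, Dendrogram.node d (Classical.arbitrary X) ⊤,
      fun x => Dendrogram.node d x ⊥, Dendrogram.node_bot_injective hd hu,
      Dendrogram.edgeWeight_pos, Dendrogram.exists_node_bot_eq_iff hd hu,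
      ⟨_, Dendrogram.treeDist_node_top_node_bot hd hT _⟩,
      fun x y => (Dendrogram.treeDist_node_bot hd hu hT x y).symm⟩
  · rintro ⟨V, -, T, hT, w, r, ι, -, hw, -, ⟨h, hh⟩, hdist⟩ x y z
    rw [hdist x y, hdist x z, hdist y z]
    exact treeDist_le_max_of_treeDist_eq hT hw (hh x) (hh y) (hh z)
end

section
/- The ground cost function c_llb (which assigns cost 0 to matching equal labels or two dummies, c_vl to matching distinct labels, and c_v to matching a label with a dummy) is a tree (pseudo)metric if and only if c_vl ≤ 2·c_v. -/
open scoped Classical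

/-- `c` is a tree (pseudo)metric on `X`: it is realized by weighted path distances in some
(finite) tree with non-negative edge weights, with the elements of `X` mapped to tree
nodes. -/
def IsTreePseudometricOn {X : Type} (c : X → X → ℝ) : Prop :=
  ∃ (V : Type) (_ : Fintype V) (T : SimpleGraph V) (hT : T.IsTree)
    (w : Sym2 V → ℝ) (ρ : X → V),
    (∀ e, 0 ≤ w e) ∧ ∀ x y, c x y = treeDist T hT w (ρ x) (ρ y)

/-- The ground cost function `c_llb` on `L ∪ {ε}` (here `Option L`, with `none` the dummy
`ε`): `0` for two equal labels or two dummies, `cvl` for two distinct labels, and `cv` when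
exactly one argument is the dummy. -/
noncomputable def cllbOpt {L : Type} (cv cvl : ℝ) : Option L → Option L → ℝ
  | some a, some b => if a = b then 0 else cvl
  | some _, none => cv
  | none, some _ => cv
  | none, none => 0

/-!
Necessity is the triangle inequality of tree distances through the dummy: two distinct labels
are at distance `cvl`, and each is at distance `cv` from the dummy. Sufficiency is the star
tree: a centre `r`, every label a leaf at distance `cvl / 2` from `r` and the dummy a leaf at
distance `cv - cvl / 2 ≥ 0` from `r`.
-/

open SimpleGraph

section TreeDist

variable {V : Type*} {T : SimpleGraph V} (hT : T.IsTree) (w : Sym2 V → ℝ)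

lemma treeDist_eq_of_isPath {u v : V} {p : T.Walk u v} (hp : p.IsPath) :
    treeDist T hT w u v = (p.edges.map w).sum := by
  obtain ⟨p₀, -, huniq⟩ := hT.existsUnique_path u v
  rw [treeDist, huniq _ (hT.existsUnique_path u v).exists.choose_spec, huniq p hp]

lemma treeDist_self (u : V) : treeDist T hT w u u = 0 := by
  simp [treeDist_eq_of_isPath hT w Walk.IsPath.nil]

variable {w}

lemma treeDist_le_sum_edges (hw : ∀ e, 0 ≤ w e) {u v : V} (q : T.Walk u v) :
    treeDist T hT w u v ≤ (q.edges.map w).sum := by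
  rw [treeDist_eq_of_isPath hT w q.bypass_isPath]
  obtain ⟨l, hperm, hsub⟩ :=
    List.subperm_of_subset q.bypass_isPath.isTrail.edges_nodup q.edges_bypass_subset_edges
  rw [← (hperm.map w).sum_eq]
  refine (hsub.map w).sum_le_sum fun _ he => ?_
  obtain ⟨e, -, rfl⟩ := List.mem_map.mp he
  exact hw e

lemma treeDist_triangle (hw : ∀ e, 0 ≤ w e) (u x v : V) :
    treeDist T hT w u v ≤ treeDist T hT w u x + treeDist T hT w x v := by
  have := treeDist_le_sum_edges hT hw
    ((hT.existsUnique_path u x).exists.choose.append (hT.existsUnique_path x v).exists.choose)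
  rwa [Walk.edges_append, List.map_append, List.sum_append] at this

end TreeDist

section Star

variable {V : Type*} {r : V} (ℓ : V → ℝ)

def starWeight : Sym2 V → ℝ :=
  Sym2.lift ⟨fun x y => ℓ x + ℓ y, fun _ _ => add_comm _ _⟩

lemma treeDist_starGraph_starWeight (hℓ : ℓ r = 0) {u v : V} (huv : u ≠ v) :
    treeDist (starGraph r) (isTree_starGraph r) (starWeight ℓ) u v = ℓ u + ℓ v := by
  by_cases hu : u = r
  · subst hu
    rw [treeDist_eq_of_isPath _ _ (Walk.IsPath.nil.cons (by simpa using huv) :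
      (Walk.cons (starGraph_center_adj huv) .nil).IsPath)]
    simp [starWeight, hℓ]
  by_cases hv : v = r
  · subst hv
    rw [treeDist_eq_of_isPath _ _ (Walk.IsPath.nil.cons (by simpa using huv) :
      (Walk.cons (starGraph_center_adj' huv.symm) .nil).IsPath)]
    simp [starWeight, hℓ]
  · have hp : (Walk.cons (starGraph_center_adj' (Ne.symm hu))
        (Walk.cons (starGraph_center_adj (Ne.symm hv)) .nil)).IsPath := by
      simp [Walk.cons_isPath_iff, hu, huv, Ne.symm hv]
    rw [treeDist_eq_of_isPath _ _ hp]
    simp [starWeight, hℓ]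

end Star

lemma isTreePseudometricOn_of_eq_ite_add {X : Type} [Fintype X] (c : X → X → ℝ) (ℓ : X → ℝ)
    (hℓ : ∀ x, 0 ≤ ℓ x) (hc : ∀ x y, c x y = if x = y then 0 else ℓ x + ℓ y) :
    IsTreePseudometricOn c := by
  refine ⟨Option X, inferInstance, starGraph none, isTree_starGraph none,
    starWeight (fun v => v.elim 0 ℓ), some, ?_, fun x y => ?_⟩
  · rintro ⟨u, v⟩
    cases u <;> cases v <;> simp [starWeight, hℓ, add_nonneg]
  · rw [hc]
    split_ifs with hxy
    · rw [hxy, treeDist_self]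
    · rw [treeDist_starGraph_starWeight (fun v => v.elim 0 ℓ) rfl
        (Option.some_injective _ |>.ne hxy)]
      rfl

theorem cllb_tree_metric_iff_general {L : Type} [Fintype L] (hL : ∃ a b : L, a ≠ b)
    (cv cvl : ℝ) (hcvl : 0 ≤ cvl) :
    IsTreePseudometricOn (cllbOpt (L := L) cv cvl) ↔ cvl ≤ 2 * cv := by
  constructor
  · rintro ⟨V, _, T, hT, w, ρ, hw, hc⟩
    obtain ⟨a, b, hab⟩ := hL
    have hlabels := hc (some a) (some b)
    have hdummy_left := hc (some a) none
    have hdummy_right := hc none (some b)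
    have := treeDist_triangle hT hw (ρ (some a)) (ρ none) (ρ (some b))
    simp only [cllbOpt, if_neg hab] at hlabels hdummy_left hdummy_right
    linarith
  · intro hle
    refine isTreePseudometricOn_of_eq_ite_add _ (fun x => x.elim (cv - cvl / 2) fun _ => cvl / 2)
      (fun x => by cases x <;> simp <;> linarith) ?_
    rintro (_ | a) (_ | b) <;> simp [cllbOpt]

/-- The ground cost function `c_llb` is a tree (pseudo)metric if and only if
`cvl ≤ 2·cv` (for a label set with at least two distinct labels and non-negative costs). -/
theorem cllb_tree_metric_iff {L : Type} [Fintype L] (hL : ∃ a b : L, a ≠ b)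
    (cv cvl : ℝ) (hcv : 0 ≤ cv) (hcvl : 0 ≤ cvl) :
    IsTreePseudometricOn (cllbOpt (L := L) cv cvl) ↔ cvl ≤ 2 * cv :=
  cllb_tree_metric_iff_general hL cv cvl hcvl
end
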